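/- Every finite subgroup Σ of a group H that is icc relative to H (in particular, every finite subgroup of an icc group) is highly core-free in H, provided H is infinite. -/

import Mathlib

/-!
If every `Sₖ` had a non-trivial core element `xₖ`, then every `h ∉ ΣF` would conjugate some `xₖ`
into the finite set `Σ`. The conjugators taking `x` to a fixed `y` form a left coset of the
centralizer of `x`, so `H` would be covered by finitely many left cosets of the centralizers
`C(xₖ)` together with the finitely many points of `ΣF`. By B. H. Neumann's lemma one of these
subgroups has finite index; it cannot be `⊥` since `H` is infinite, so some `C(xₖ)` has finite
index and `xₖ` has finitely many conjugates. But `xₖ` is conjugate to a non-trivial element of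
`Σ`, whose conjugacy class is infinite.
-/

open scoped Pointwise

/-- The set ΣF = {σf : σ ∈ Σ, f ∈ F}. -/
def cosetProd {H : Type*} [Group H] (A : Subgroup H) (F : Set H) : Set H :=
  {h | ∃ σ ∈ A, ∃ f ∈ F, h = σ * f}

/-- A subgroup `A ≤ H` is highly core-free if for every finite `F ⊆ H`, every `n ≥ 1`
and all nonempty `S₁, …, Sₙ ⊆ H` covering `H \ ΣF`, some `Sₖ` has trivial core
`⋂_{h ∈ Sₖ} h⁻¹ A h = {1}`. -/
def HighlyCoreFree {H : Type*} [Group H] (A : Subgroup H) : Prop :=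
  ∀ F : Set H, F.Finite → ∀ n : ℕ, 1 ≤ n → ∀ S : Fin n → Set H,
    (∀ k, (S k).Nonempty) → (∀ h : H, h ∉ cosetProd A F → ∃ k, h ∈ S k) →
    ∃ k, ∀ x : H, (∀ h ∈ S k, h * x * h⁻¹ ∈ A) → x = 1

section

variable {G : Type*} [Group G]

lemma cosetProd_eq_mul (A : Subgroup G) (F : Set G) : cosetProd A F = (A : Set G) * F := by
  ext h
  simp [cosetProd, Set.mem_mul, eq_comm]

lemma setOf_exists_conj_eq (σ : G) : {g | ∃ t : G, g = t * σ * t⁻¹} = {g | IsConj σ g} := by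
  ext g
  simp [isConj_iff, eq_comm]

lemma finite_setOf_isConj_of_finiteIndex_centralizer (x : G)
    [hx : (Subgroup.centralizer {x}).FiniteIndex] : {g | IsConj x g}.Finite := by
  have hstab : (MulAction.stabilizer (ConjAct G) x).index = (Subgroup.centralizer {x}).index := by
    rw [Subgroup.centralizer_eq_comap_stabilizer]
    exact (Subgroup.index_comap_of_surjective _ ConjAct.toConjAct.surjective).symm
  have horbit := hx.index_ne_zero
  rw [← hstab, MulAction.index_stabilizer] at horbit
  exact (Set.finite_of_ncard_ne_zero horbit).subset fun g hg ↦
    ConjAct.mem_orbit_conjAct.mpr hg.symm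

lemma setOf_conj_eq_subset_smul_centralizer (x t : G) :
    {h | h * x * h⁻¹ = t * x * t⁻¹} ⊆ t • (Subgroup.centralizer {x} : Set G) := by
  intro h hh
  rw [Set.mem_smul_set_iff_inv_smul_mem, smul_eq_mul, SetLike.mem_coe,
    Subgroup.mem_centralizer_singleton_iff]
  calc t⁻¹ * h * x = t⁻¹ * (h * x * h⁻¹) * h := by group
    _ = t⁻¹ * (t * x * t⁻¹) * h := by rw [hh]
    _ = x * (t⁻¹ * h) := by group

lemma Subgroup.exists_finiteIndex_of_cover_subset_leftCoset {ι : Type*} {s : Finset ι}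
    {U : ι → Set G} {K : ι → Subgroup G} (hcover : ⋃ i ∈ s, U i = Set.univ)
    (hU : ∀ i ∈ s, ∃ g : G, U i ⊆ g • (K i : Set G)) : ∃ i ∈ s, (K i).FiniteIndex := by
  choose! g hg using hU
  refine Subgroup.exists_finiteIndex_of_leftCoset_cover (g := g) (Set.eq_univ_of_univ_subset ?_)
  rw [← hcover]
  exact Set.iUnion₂_mono hg

lemma exists_finiteIndex_centralizer_of_forall_conj_mem [Infinite G] {s X T : Set G}
    (hs : s.Finite) (hX : X.Finite) (hT : T.Finite)
    (hconj : ∀ h ∉ s, ∃ x ∈ X, h * x * h⁻¹ ∈ T) :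
    ∃ x ∈ X, (Subgroup.centralizer {x}).FiniteIndex := by
  classical
  let U : G ⊕ (G × G) → Set G := Sum.elim (fun h ↦ {h}) fun p ↦ {h | h * p.1 * h⁻¹ = p.2}
  let K : G ⊕ (G × G) → Subgroup G := Sum.elim (fun _ ↦ ⊥) fun p ↦ Subgroup.centralizer {p.1}
  let I := hs.toFinset.disjSum (hX.toFinset ×ˢ hT.toFinset)
  have hcover : ⋃ i ∈ I, U i = Set.univ := by
    refine Set.eq_univ_of_forall fun h ↦ Set.mem_iUnion₂.mpr ?_
    by_cases hh : h ∈ s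
    · exact ⟨.inl h, by simpa [I] using hh, rfl⟩
    · obtain ⟨x, hx, hxT⟩ := hconj h hh
      exact ⟨.inr (x, h * x * h⁻¹), by simpa [I] using ⟨hx, hxT⟩, rfl⟩
  have hU : ∀ i ∈ I, ∃ g : G, U i ⊆ g • (K i : Set G) := by
    rintro (h | ⟨x, y⟩) -
    · exact ⟨h, by simp [U, K]⟩
    · by_cases hy : ∃ t, t * x * t⁻¹ = y
      · obtain ⟨t, rfl⟩ := hy
        exact ⟨t, setOf_conj_eq_subset_smul_centralizer x t⟩
      · exact ⟨1, fun h hh ↦ (hy ⟨h, hh⟩).elim⟩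
  obtain ⟨i, hi, hfi⟩ := Subgroup.exists_finiteIndex_of_cover_subset_leftCoset hcover hU
  rcases i with h | ⟨x, y⟩
  · simp [K, Subgroup.finiteIndex_iff] at hfi
  · exact ⟨x, (by simpa [I] using hi : x ∈ X ∧ y ∈ T).1, hfi⟩

end

/-- A finite subgroup which is icc relative to the (infinite) ambient group is
highly core-free. -/
theorem finite_relatively_icc_hcf {H : Type*} [Group H] [Infinite H] (A : Subgroup H)
    (hfin : (A : Set H).Finite)
    (hicc : ∀ σ : H, σ ∈ A → σ ≠ 1 → Set.Infinite {g : H | ∃ t : H, g = t * σ * t⁻¹}) :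
    HighlyCoreFree A := by
  intro F hF n _ S hne hcov
  by_contra! hcore
  choose x hxcore hx1 using hcore
  have hAF : (cosetProd A F).Finite := cosetProd_eq_mul A F ▸ hfin.mul hF
  obtain ⟨_, ⟨k, rfl⟩, hfi⟩ := exists_finiteIndex_centralizer_of_forall_conj_mem hAF
    (Set.finite_range x) hfin fun h hh ↦
      let ⟨k, hk⟩ := hcov h hh
      ⟨x k, ⟨k, rfl⟩, hxcore k h hk⟩
  obtain ⟨h₀, hh₀⟩ := hne k
  have hσ1 : h₀ * x k * h₀⁻¹ ≠ 1 := by simpa using hx1 k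
  refine hicc _ (hxcore k h₀ hh₀) hσ1
    ((finite_setOf_isConj_of_finiteIndex_centralizer (x k)).subset ?_)
  rw [setOf_exists_conj_eq]
  exact fun g hg ↦ (isConj_iff.mpr ⟨h₀, rfl⟩).trans hg
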